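/- With A as defined (A(s) = −s² log(s²) for 0 ≤ s ≤ e^(−3), A(s) = 3s² + 4e^(−3)s − e^(−6) for s ≥ e^(−3)), the function satisfies A(2s) ≤ 4 A(s) for all s ≥ 0. -/
import Mathlib


open Real

/-- The auxiliary function `A` from the Brézis–Lieb type splitting of `s² log s²`. -/
noncomputable def auxA : ℝ → ℝ := fun s =>
  if s ≤ Real.exp (-3) then -(s ^ 2 * Real.log (s ^ 2))
  else 3 * s ^ 2 + 4 * Real.exp (-3) * s - Real.exp (-6)

theorem auxA_doubling (s : ℝ) (hs : 0 ≤ s) : auxA (2 * s) ≤ 4 * auxA s := by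
  unfold auxA
  rcases eq_or_lt_of_le hs with h0 | h0
  · simp [← h0, Real.exp_pos (-3) |>.le]
  by_cases h2 : 2 * s ≤ Real.exp (-3)
  · have hs1 : s ≤ Real.exp (-3) := le_trans (by linarith) h2
    rw [if_pos h2, if_pos hs1]
    have hlog : Real.log ((2*s)^2) = Real.log 4 + Real.log (s^2) := by
      rw [mul_pow, show (2:ℝ)^2 = 4 by norm_num,
        Real.log_mul (by norm_num) (by positivity)]
    rw [hlog]
    have h4 : (0:ℝ) ≤ Real.log 4 := Real.log_nonneg (by norm_num)
    nlinarith [sq_nonneg s, mul_nonneg (sq_nonneg s) h4]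
  · push_neg at h2
    rw [if_neg (not_le.mpr h2)]
    have he6 : Real.exp (-6) = Real.exp (-3) * Real.exp (-3) := by
      rw [← Real.exp_add]; norm_num
    by_cases hs1 : s ≤ Real.exp (-3)
    · rw [if_pos hs1]
      have hlog : Real.log (s^2) = 2 * Real.log s := by
        rw [show s^2 = s*s by ring, Real.log_mul h0.ne' h0.ne']; ring
      have hls : Real.log s ≤ -3 := by
        calc Real.log s ≤ Real.log (Real.exp (-3)) :=
              Real.log_le_log h0 hs1
        _ = -3 := Real.log_exp _
      rw [hlog]
      nlinarith [mul_nonneg (sq_nonneg s) (by linarith : (0:ℝ) ≤ -Real.log s - 3),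
        mul_nonneg (by linarith : (0:ℝ) ≤ 6*s - Real.exp (-3))
          (by linarith : (0:ℝ) ≤ 2*s - Real.exp (-3))]
    · rw [if_neg hs1]
      push_neg at hs1
      nlinarith [Real.exp_pos (-3), mul_lt_mul_of_pos_left hs1 (Real.exp_pos (-3))]
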